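/- Let E be a real Banach space and let Ω be a closed, convex, bounded subset of E which is equal to the closed convex hull of its set of extreme points ex Ω. Then for every x ∈ Ω there is a sequence (x_n)_{n≥1} of points of ex Ω which is Cesàro summable to x, i.e. (x_1+⋯+x_N)/N converges in norm to x as N → ∞. -/

import Mathlib

/-!
A point `x` of the closed convex hull of `S` is a limit of uniform averages `y k` of finite
families of points of `S` (with repetition): these are the convex combinations with rational
weights, and the closure of the set they form is convex. Repeating the family behind `y k`
periodically gives a sequence in `S` whose first `t` terms sum to `t • y k` up to an error
bounded by some `c k`. Concatenate these periodic sequences, the `k`-th one filling the block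
of indices `[T k, T (k + 1))`, where `T k ≥ k * (c 0 + ⋯ + c k)`. Up to any time `N` in block
`k` the partial sum then differs from that of `y` along the blocks by at most `N / k`, and the
Cesàro means of `y` along the blocks tend to `x`.
-/

open Filter Finset Topology

theorem Function.Periodic.sum_range_eq_sum_range_mod {M : Type*} [AddCommMonoid M]
    {h : ℕ → M} {D : ℕ} (hh : Function.Periodic h D) (hD : ∑ i ∈ range D, h i = 0) (t : ℕ) :
    ∑ i ∈ range t, h i = ∑ i ∈ range (t % D), h i := by
  obtain rfl | hDpos := D.eq_zero_or_pos
  · rw [Nat.mod_zero]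
  induction t using Nat.strong_induction_on with
  | _ t ih =>
    rcases lt_or_ge t D with ht | ht
    · rw [Nat.mod_eq_of_lt ht]
    · obtain ⟨s, rfl⟩ := Nat.exists_eq_add_of_le ht
      rw [sum_range_add, hD, zero_add, Nat.add_mod_left, ← ih s (by omega)]
      exact sum_congr rfl fun i _ => by rw [add_comm, hh]

section Blocks

variable {T : ℕ → ℕ}

def blockIndex (T : ℕ → ℕ) (n : ℕ) : ℕ := Nat.findGreatest (fun k => T k ≤ n) n

lemma blockIndex_eq (hT : StrictMono T) {k n : ℕ} (h₁ : T k ≤ n) (h₂ : n < T (k + 1)) :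
    blockIndex T n = k :=
  Nat.findGreatest_eq_iff.2 ⟨hT.le_apply.trans h₁, fun _ => h₁, fun _ hj _ hTj =>
    (h₂.trans_le (hT.monotone hj)).not_ge hTj⟩

lemma apply_blockIndex_le (hT0 : T 0 = 0) (n : ℕ) : T (blockIndex T n) ≤ n :=
  Nat.findGreatest_spec (P := fun k => T k ≤ n) (Nat.zero_le n) (by simp [hT0])

lemma lt_apply_blockIndex_succ (hT : StrictMono T) (n : ℕ) : n < T (blockIndex T n + 1) := by
  by_contra! h
  exact Nat.findGreatest_is_greatest (Nat.lt_succ_self _) (hT.le_apply.trans h) h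

lemma tendsto_blockIndex (hT : StrictMono T) : Tendsto (blockIndex T) atTop atTop :=
  tendsto_atTop_atTop.2 fun k => ⟨T k, fun n hn => by
    by_contra! h
    exact (lt_apply_blockIndex_succ hT n).not_ge ((hT.monotone h).trans hn)⟩

def blockConcat {α : Type*} (T : ℕ → ℕ) (b : ℕ → ℕ → α) (n : ℕ) : α :=
  b (blockIndex T n) (n - T (blockIndex T n))

lemma sum_Ico_blockConcat {M : Type*} [AddCommMonoid M] (hT : StrictMono T) (b : ℕ → ℕ → M)
    {k n : ℕ} (h₁ : T k ≤ n) (h₂ : n ≤ T (k + 1)) :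
    ∑ i ∈ Ico (T k) n, blockConcat T b i = ∑ i ∈ range (n - T k), b k i := by
  refine (sum_Ico_eq_sum_range _ _ _).trans (sum_congr rfl fun i hi => ?_)
  have : blockIndex T (T k + i) = k :=
    blockIndex_eq hT (Nat.le_add_right _ _) (by have := mem_range.1 hi; omega)
  simp [blockConcat, this]

variable {E : Type*} [SeminormedAddCommGroup E] {b : ℕ → ℕ → E} {c : ℕ → ℝ}

lemma norm_sum_range_apply_blockConcat_le (hT : StrictMono T) (hT0 : T 0 = 0)
    (hb : ∀ k t, ‖∑ i ∈ range t, b k i‖ ≤ c k) (k : ℕ) :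
    ‖∑ i ∈ range (T k), blockConcat T b i‖ ≤ ∑ j ∈ range k, c j := by
  induction k with
  | zero => simp [hT0]
  | succ k ih =>
    have hk : T k ≤ T (k + 1) := hT.monotone k.le_succ
    rw [← sum_range_add_sum_Ico _ hk, sum_Ico_blockConcat hT b hk le_rfl, sum_range_succ]
    exact (norm_add_le _ _).trans (add_le_add ih (hb _ _))

lemma norm_sum_range_blockConcat_le (hT : StrictMono T) (hT0 : T 0 = 0)
    (hb : ∀ k t, ‖∑ i ∈ range t, b k i‖ ≤ c k) (n : ℕ) :
    ‖∑ i ∈ range n, blockConcat T b i‖ ≤ ∑ j ∈ range (blockIndex T n + 1), c j := by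
  have h₁ := apply_blockIndex_le hT0 n
  rw [← sum_range_add_sum_Ico _ h₁,
    sum_Ico_blockConcat hT b h₁ (lt_apply_blockIndex_succ hT n).le, sum_range_succ]
  exact (norm_add_le _ _).trans
    (add_le_add (norm_sum_range_apply_blockConcat_le hT hT0 hb _) (hb _ _))

end Blocks

theorem exists_tendsto_cesaro_blockConcat {E : Type*} [NormedAddCommGroup E] [NormedSpace ℝ E]
    {x : E} {y : ℕ → E} (hy : Tendsto y atTop (𝓝 x)) {b : ℕ → ℕ → E} {c : ℕ → ℝ}
    (hb : ∀ k t, ‖∑ i ∈ range t, (b k i - y k)‖ ≤ c k) :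
    ∃ T : ℕ → ℕ, Tendsto (fun N : ℕ => (N : ℝ)⁻¹ • ∑ i ∈ range N, blockConcat T b i)
      atTop (𝓝 x) := by
  set C : ℕ → ℕ := fun k => ∑ j ∈ range (k + 1), ⌈c j⌉₊
  have hC : Monotone C := fun k l hkl => sum_le_sum_of_subset (range_mono (by omega))
  set T : ℕ → ℕ := fun k => k * (C k + 1)
  have hT : StrictMono T := strictMono_nat_of_lt_succ fun k => by
    have := hC k.le_succ
    simp only [T]
    nlinarith
  have hT0 : T 0 = 0 := zero_mul _
  refine ⟨T, ?_⟩
  set F : ℕ → ℕ → E := fun k i => b k i - y k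
  have hsplit : ∀ N, ∑ i ∈ range N, blockConcat T b i
      = ∑ i ∈ range N, y (blockIndex T i) + ∑ i ∈ range N, blockConcat T F i := fun N => by
    rw [← sum_add_distrib]
    simp [blockConcat, F]
  have hκ := tendsto_blockIndex hT
  have hmain : Tendsto (fun N : ℕ => (N : ℝ)⁻¹ • ∑ i ∈ range N, y (blockIndex T i)) atTop (𝓝 x) :=
    (hy.comp hκ).cesaro_smul
  have herr : Tendsto (fun N : ℕ => (N : ℝ)⁻¹ • ∑ i ∈ range N, blockConcat T F i)
      atTop (𝓝 0) := by
    refine squeeze_zero_norm' ?_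
      (tendsto_inv_atTop_zero.comp (tendsto_natCast_atTop_atTop.comp hκ))
    filter_upwards [hκ.eventually_ge_atTop 1] with N hN
    set k := blockIndex T N
    have hdisc : ‖∑ i ∈ range N, blockConcat T F i‖ ≤ C k := by
      refine (norm_sum_range_blockConcat_le hT hT0 hb N).trans ?_
      push_cast [C]
      exact sum_le_sum fun j _ => Nat.le_ceil _
    have hTN : (k : ℝ) * (C k + 1) ≤ N := by exact_mod_cast apply_blockIndex_le hT0 N
    have hk : (1 : ℝ) ≤ k := by exact_mod_cast hN
    rw [norm_smul, norm_inv, Real.norm_natCast, Function.comp_apply, Function.comp_apply,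
      inv_mul_le_iff₀ (by nlinarith), ← div_eq_mul_inv, le_div_iff₀ (by positivity)]
    nlinarith
  simpa [hsplit, smul_add] using hmain.add herr

theorem convex_closure_of_forall_div_mem {E : Type*} [AddCommGroup E] [Module ℝ E]
    [TopologicalSpace E] [IsTopologicalAddGroup E] [ContinuousSMul ℝ E] {A : Set E}
    (hA : ∀ u ∈ A, ∀ v ∈ A, ∀ k n : ℕ, k ≤ n → 0 < n →
      ((k : ℝ) / n) • u + (1 - (k : ℝ) / n) • v ∈ A) :
    Convex ℝ (closure A) := by
  intro u hu v hv a b ha hb hab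
  obtain rfl : b = 1 - a := by linarith
  have hdiv (k n : ℕ) (hkn : k ≤ n) (hn : 0 < n) :
      ((k : ℝ) / n) • u + (1 - (k : ℝ) / n) • v ∈ closure A :=
    map_mem_closure₂ (f := fun u v => ((k : ℝ) / n) • u + (1 - (k : ℝ) / n) • v)
      (by fun_prop) hu hv fun u hu v hv => hA u hu v hv k n hkn hn
  have hfloor : Tendsto (fun n : ℕ => (⌊a * n⌋₊ : ℝ) / n) atTop (𝓝 a) :=
    (tendsto_nat_floor_mul_div_atTop ha).comp tendsto_natCast_atTop_atTop
  rw [← closure_closure (s := A)]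
  refine mem_closure_of_tendsto
    ((hfloor.smul_const u).add ((tendsto_const_nhds.sub hfloor).smul_const v)) ?_
  filter_upwards [eventually_gt_atTop 0] with n hn
  exact hdiv _ n (Nat.floor_le_of_le (mul_le_of_le_one_left n.cast_nonneg (by linarith))) hn

section FiniteAverages

variable {E : Type*} [NormedAddCommGroup E] [NormedSpace ℝ E] {S : Set E}

def finiteAverages (S : Set E) : Set E :=
  {y | ∃ s : Multiset E, s ≠ 0 ∧ (∀ z ∈ s, z ∈ S) ∧ y = (Multiset.card s : ℝ)⁻¹ • s.sum}

lemma mem_finiteAverages_of_mem {z : E} (hz : z ∈ S) : z ∈ finiteAverages S :=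
  ⟨{z}, by simp, by simpa, by simp⟩

lemma div_smul_add_mem_finiteAverages {u v : E} (hu : u ∈ finiteAverages S)
    (hv : v ∈ finiteAverages S) {k n : ℕ} (hkn : k ≤ n) (hn : 0 < n) :
    ((k : ℝ) / n) • u + (1 - (k : ℝ) / n) • v ∈ finiteAverages S := by
  obtain ⟨s, hs0, hsS, rfl⟩ := hu
  obtain ⟨r, hr0, hrS, rfl⟩ := hv
  have hs : (Multiset.card s : ℝ) ≠ 0 := by simpa using hs0
  have hr : (Multiset.card r : ℝ) ≠ 0 := by simpa using hr0
  set m := (k * Multiset.card r) • s + ((n - k) * Multiset.card s) • r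
  have hcard : (Multiset.card m : ℝ) = n * Multiset.card s * Multiset.card r := by
    simp only [m, Multiset.card_add, Multiset.card_nsmul]
    push_cast [hkn]
    ring
  refine ⟨m, fun h => ?_, fun z hz => ?_, ?_⟩
  · simp [h, hs, hr, hn.ne'] at hcard
  · rcases Multiset.mem_add.1 hz with hz | hz
    exacts [hsS z (Multiset.mem_of_mem_nsmul hz), hrS z (Multiset.mem_of_mem_nsmul hz)]
  · simp only [hcard, m, Multiset.sum_add, Multiset.sum_nsmul, smul_add,
      ← Nat.cast_smul_eq_nsmul ℝ, smul_smul]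
    push_cast [hkn]
    congr 1 <;> congr 1 <;> field_simp

lemma closure_convexHull_subset_closure_finiteAverages :
    closure (convexHull ℝ S) ⊆ closure (finiteAverages S) :=
  closure_minimal (convexHull_min (fun _ hz => subset_closure (mem_finiteAverages_of_mem hz))
    (convex_closure_of_forall_div_mem fun _ hu _ hv _ _ hkn hn =>
      div_smul_add_mem_finiteAverages hu hv hkn hn)) isClosed_closure

lemma exists_norm_sum_sub_le_of_mem_finiteAverages {y : E} (hy : y ∈ finiteAverages S) :
    ∃ g : ℕ → E, (∀ i, g i ∈ S) ∧ ∃ c, ∀ t, ‖∑ i ∈ range t, (g i - y)‖ ≤ c := by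
  obtain ⟨s, hs0, hsS, rfl⟩ := hy
  set l := s.toList
  have hl : 0 < l.length := by simpa [l, Multiset.card_pos] using hs0
  set g : ℕ → E := fun i => l[i % l.length]'(Nat.mod_lt _ hl)
  refine ⟨g, fun i => hsS _ (Multiset.mem_toList.1 (List.getElem_mem _)),
    ∑ i ∈ range l.length, ‖g i - (Multiset.card s : ℝ)⁻¹ • s.sum‖, fun t => ?_⟩
  have hper : Function.Periodic (fun i => g i - (Multiset.card s : ℝ)⁻¹ • s.sum) l.length :=
    fun i => by simp [g]
  have hzero : ∑ i ∈ range l.length, (g i - (Multiset.card s : ℝ)⁻¹ • s.sum) = 0 := by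
    have hsum : ∑ i ∈ range l.length, g i = s.sum := by
      rw [sum_range, ← Multiset.sum_toList, ← Fin.sum_univ_getElem]
      exact sum_congr rfl fun i _ => by simp only [g]; congr 1; exact Nat.mod_eq_of_lt i.2
    rw [sum_sub_distrib, hsum, sum_const, card_range, ← Nat.cast_smul_eq_nsmul ℝ, smul_smul]
    simp [l, Multiset.card_pos.2 hs0 |>.ne']
  rw [hper.sum_range_eq_sum_range_mod hzero]
  exact (norm_sum_le _ _).trans (sum_le_sum_of_subset_of_nonneg
    (range_mono (Nat.mod_lt _ hl).le) fun _ _ _ => norm_nonneg _)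

end FiniteAverages

theorem exists_tendsto_cesaro_of_mem_closure_convexHull {E : Type*} [NormedAddCommGroup E]
    [NormedSpace ℝ E] {S : Set E} {x : E} (hx : x ∈ closure (convexHull ℝ S)) :
    ∃ seq : ℕ → E, (∀ n, seq n ∈ S) ∧
      Tendsto (fun N : ℕ => (N : ℝ)⁻¹ • ∑ k ∈ range N, seq k) atTop (𝓝 x) := by
  obtain ⟨y, hyS, hy⟩ :=
    mem_closure_iff_seq_limit.1 (closure_convexHull_subset_closure_finiteAverages hx)
  choose g hgS c hc using fun k => exists_norm_sum_sub_le_of_mem_finiteAverages (hyS k)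
  obtain ⟨T, hT⟩ := exists_tendsto_cesaro_blockConcat hy hc
  exact ⟨blockConcat T g, fun n => hgS _ _, hT⟩

theorem stmt6_general {E : Type*} [NormedAddCommGroup E] [NormedSpace ℝ E]
    (Ω : Set E)
    (hKM : Ω = closure (convexHull ℝ (Ω.extremePoints ℝ))) :
    ∀ x ∈ Ω, ∃ seq : ℕ → E, (∀ n, seq n ∈ Ω.extremePoints ℝ) ∧
      Tendsto (fun N : ℕ => (N : ℝ)⁻¹ • (∑ k ∈ Finset.range N, seq k))
        atTop (nhds x) :=
  fun _ hx => exists_tendsto_cesaro_of_mem_closure_convexHull (hKM ▸ hx)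

/-- Let `Ω` be a closed convex bounded subset of a real
Banach space `E` which equals the closed convex hull of its set of extreme
points.  Then every `x ∈ Ω` is the Cesàro limit of a sequence of extreme
points of `Ω`. -/
theorem stmt6 {E : Type*} [NormedAddCommGroup E] [NormedSpace ℝ E] [CompleteSpace E]
    (Ω : Set E) (hclosed : IsClosed Ω) (hconv : Convex ℝ Ω)
    (hbdd : Bornology.IsBounded Ω)
    (hKM : Ω = closure (convexHull ℝ (Ω.extremePoints ℝ))) :
    ∀ x ∈ Ω, ∃ seq : ℕ → E, (∀ n, seq n ∈ Ω.extremePoints ℝ) ∧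
      Tendsto (fun N : ℕ => (N : ℝ)⁻¹ • (∑ k ∈ Finset.range N, seq k))
        atTop (nhds x) :=
  stmt6_general Ω hKM
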